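/- arXiv:2309.04796 — 3 statements merged into one kernel-verified Lean document; each statement's English description precedes it below -/
import Mathlib

section
/- For nonzero α ∈ ℂ^n with α_i ≠ α_j for some pair, and t = 1/μ_{𝒟_n}(α), one has d_α(z_i, z_j) = m(t·α_i, t·α_j) for all i, j; in particular the supremum defining d_α is attained by a holomorphic function f: Ω → closure(D) with (f(z1),…,f(zn)) ∈ ℂ·α. -/
/-!
The value set `PickBody` is convex, balanced and absorbent (Carathéodory hyperbolicity gives
Lagrange interpolation by bounded holomorphic functions), and lies in the unit polydisc. Hence
`s • α` is a value vector for `0 ≤ s < t`, while `f (z k) = c * α k` with `f : Ω → 𝔻` forces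
`‖c‖ ≤ t`. Since `s ↦ pdist (s * a) (s * b)` increases as long as `s * a, s * b` stay in the closed
disc, the supremum defining `dInv` is `pdist (t * α i) (t * α j)`. It is attained by a limit of
functions realising `s • α`, `s ↑ t`: pointwise limits of bounded holomorphic functions along an
ultrafilter are holomorphic, because uniform second-order Cauchy estimates pass to the limit.
-/

open Complex Metric Set

noncomputable def pdist (a b : ℂ) : ℝ := ‖(a - b) / (1 - (starRingEnd ℂ) a * b)‖

def PickBody (m n : ℕ) (Ω : Set (Fin m → ℂ)) (z : Fin n → (Fin m → ℂ)) :
    Set (Fin n → ℂ) :=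
  {w | ∃ f : (Fin m → ℂ) → ℂ, DifferentiableOn ℂ f Ω ∧
        (∃ c : ℝ, c < 1 ∧ ∀ x ∈ Ω, ‖f x‖ ≤ c) ∧ ∀ j, f (z j) = w j}

noncomputable def dInv (m n : ℕ) (Ω : Set (Fin m → ℂ)) (z : Fin n → (Fin m → ℂ))
    (α : Fin n → ℂ) (i j : Fin n) : ℝ :=
  sSup {r : ℝ | ∃ f : (Fin m → ℂ) → ℂ, DifferentiableOn ℂ f Ω ∧
    MapsTo f Ω (ball (0:ℂ) 1) ∧ (∃ c : ℂ, ∀ k, f (z k) = c * α k) ∧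
    r = pdist (f (z i)) (f (z j))}

open Filter Topology

section Pdist

lemma pdist_self (a : ℂ) : pdist a a = 0 := by simp [pdist]

lemma pdist_nonneg (a b : ℂ) : 0 ≤ pdist a b := norm_nonneg _

lemma one_sub_conj_mul_ne_zero {a b : ℂ} (ha : ‖a‖ ≤ 1) (hb : ‖b‖ ≤ 1) (hab : a ≠ b) :
    1 - (starRingEnd ℂ) a * b ≠ 0 := by
  intro h
  have hab1 : ‖a‖ * ‖b‖ = 1 := by
    simpa using congrArg norm (sub_eq_zero.1 h).symm
  have ha1 : ‖a‖ = 1 := le_antisymm ha (by nlinarith [norm_nonneg a, norm_nonneg b])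
  have haa : (starRingEnd ℂ) a * a = 1 := by
    rw [mul_comm, mul_conj, normSq_eq_norm_sq, ha1]; norm_num
  exact hab (by linear_combination (-a) * (sub_eq_zero.1 h).symm + b * haa)

lemma pdist_ofReal_mul (r : ℝ) (a b : ℂ) :
    pdist (r * a) (r * b) = |r| * ‖a - b‖ / ‖1 - ((r ^ 2 : ℝ) : ℂ) * ((starRingEnd ℂ) a * b)‖ := by
  rw [pdist, norm_div, ← mul_sub, norm_mul, norm_real, Real.norm_eq_abs]
  congr 3
  simp only [map_mul, conj_ofReal]
  push_cast
  ring

lemma pdist_mul_eq_pdist_norm_mul (c a b : ℂ) :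
    pdist (c * a) (c * b) = pdist (‖c‖ * a) (‖c‖ * b) := by
  rw [pdist_ofReal_mul, abs_norm, pdist, norm_div, ← mul_sub, norm_mul]
  congr 2
  have : (starRingEnd ℂ) c * c = ((‖c‖ ^ 2 : ℝ) : ℂ) := by
    rw [mul_comm, mul_conj, normSq_eq_norm_sq]
  simp only [map_mul]
  linear_combination (-((starRingEnd ℂ) a * b)) * this

lemma one_sub_sq_mul_conj_mul_ne_zero {r : ℝ} {a b : ℂ} (hr : 0 ≤ r) (ha : r * ‖a‖ ≤ 1)
    (hb : r * ‖b‖ ≤ 1) (hab : a ≠ b) : 1 - ((r ^ 2 : ℝ) : ℂ) * ((starRingEnd ℂ) a * b) ≠ 0 := by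
  rcases hr.eq_or_lt with rfl | hr
  · simp
  have := one_sub_conj_mul_ne_zero (a := r * a) (b := r * b)
    (by rwa [norm_mul, norm_real, Real.norm_of_nonneg hr.le])
    (by rwa [norm_mul, norm_real, Real.norm_of_nonneg hr.le]) (by simpa [hr.ne'] using hab)
  simp only [map_mul, conj_ofReal] at this
  convert this using 2
  push_cast
  ring

lemma continuousAt_pdist_ofReal_mul {t : ℝ} {a b : ℂ} (ht : 0 ≤ t) (ha : t * ‖a‖ ≤ 1)
    (hb : t * ‖b‖ ≤ 1) : ContinuousAt (fun s : ℝ => pdist (s * a) (s * b)) t := by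
  rcases eq_or_ne a b with rfl | hab
  · simpa only [pdist_self] using continuousAt_const
  simp only [pdist_ofReal_mul]
  exact ContinuousAt.div (by fun_prop) (by fun_prop)
    (norm_ne_zero_iff.2 (one_sub_sq_mul_conj_mul_ne_zero ht ha hb hab))

lemma norm_one_sub_ofReal_mul_sq (r : ℝ) (w : ℂ) :
    ‖1 - (r : ℂ) * w‖ ^ 2 = 1 - 2 * r * w.re + r ^ 2 * ‖w‖ ^ 2 := by
  rw [Complex.sq_norm, Complex.sq_norm, normSq_apply, normSq_apply]
  simp only [sub_re, sub_im, one_re, one_im, mul_re, mul_im, ofReal_re, ofReal_im]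
  ring

lemma pdist_ofReal_mul_le {s t : ℝ} {a b : ℂ} (hs : 0 ≤ s) (hst : s ≤ t)
    (ha : t * ‖a‖ ≤ 1) (hb : t * ‖b‖ ≤ 1) :
    pdist (s * a) (s * b) ≤ pdist (t * a) (t * b) := by
  rcases eq_or_ne a b with rfl | hab
  · simp [pdist_self]
  rcases hs.eq_or_lt with rfl | hs
  · simpa only [ofReal_zero, zero_mul, pdist_self] using pdist_nonneg _ _
  have ht := hs.trans_le hst
  set w := (starRingEnd ℂ) a * b
  have hden : ∀ r : ℝ, 0 ≤ r → r ≤ t → 0 < ‖1 - ((r ^ 2 : ℝ) : ℂ) * w‖ := fun r hr hrt =>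
    norm_pos_iff.2 <| one_sub_sq_mul_conj_mul_ne_zero hr
      ((mul_le_mul_of_nonneg_right hrt (norm_nonneg a)).trans ha)
      ((mul_le_mul_of_nonneg_right hrt (norm_nonneg b)).trans hb) hab
  have hw : s * t * ‖w‖ ≤ 1 := by
    have : ‖w‖ = ‖a‖ * ‖b‖ := by simp [w]
    rw [this]
    nlinarith [mul_le_mul ha hb (by positivity) zero_le_one, norm_nonneg a, norm_nonneg b,
      mul_nonneg (mul_nonneg hs.le ht.le) (mul_nonneg (norm_nonneg a) (norm_nonneg b))]
  have key : s * ‖1 - ((t ^ 2 : ℝ) : ℂ) * w‖ ≤ t * ‖1 - ((s ^ 2 : ℝ) : ℂ) * w‖ := by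
    refine (pow_le_pow_iff_left₀ (by positivity) (by positivity) two_ne_zero).1 ?_
    rw [mul_pow, mul_pow, norm_one_sub_ofReal_mul_sq, norm_one_sub_ofReal_mul_sq]
    -- the difference of the two sides is `(t² - s²) (1 - (s t ‖w‖)²)`
    nlinarith [mul_nonneg (sub_nonneg.2 (pow_le_pow_left₀ hs.le hst 2))
      (mul_nonneg (sub_nonneg.2 hw) (add_nonneg zero_le_one (by positivity : 0 ≤ s * t * ‖w‖)))]
  rw [pdist_ofReal_mul, pdist_ofReal_mul, abs_of_pos hs, abs_of_pos ht,
    div_le_div_iff₀ (hden s hs.le hst) (hden t ht.le le_rfl), mul_right_comm, mul_right_comm t]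
  exact mul_le_mul_of_nonneg_right key (norm_nonneg _)

end Pdist

section CauchyEstimates

lemma norm_dslope_le_two_mul_div {φ : ℂ → ℂ} {c z : ℂ} {ρ M : ℝ}
    (hφ : DifferentiableOn ℂ φ (ball c ρ)) (hM : ∀ w ∈ ball c ρ, ‖φ w‖ ≤ M) (hz : z ∈ ball c ρ) :
    ‖dslope φ c z‖ ≤ 2 * M / ρ := by
  refine norm_dslope_le_div_of_mapsTo_ball hφ (fun w hw => ?_) hz
  rw [mem_closedBall, dist_eq_norm]
  linarith [norm_sub_le (φ w) (φ c), hM w hw, hM c (mem_ball_self (pos_of_mem_ball hz))]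

/-- Second-order Cauchy estimate: apply the Schwarz bound to `dslope φ c`. -/
lemma norm_sub_sub_deriv_mul_le {φ : ℂ → ℂ} {c z : ℂ} {ρ M : ℝ}
    (hφ : DifferentiableOn ℂ φ (ball c ρ)) (hM : ∀ w ∈ ball c ρ, ‖φ w‖ ≤ M) (hz : z ∈ ball c ρ) :
    ‖φ z - φ c - deriv φ c * (z - c)‖ ≤ 4 * M / ρ ^ 2 * ‖z - c‖ ^ 2 := by
  set g := dslope φ c
  have hg : DifferentiableOn ℂ g (ball c ρ) :=
    (differentiableOn_dslope (ball_mem_nhds c (pos_of_mem_ball hz))).2 hφ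
  have hgz := norm_dslope_le_two_mul_div hg (fun w hw => norm_dslope_le_two_mul_div hφ hM hw) hz
  have hφz : φ z - φ c - deriv φ c * (z - c) = (z - c) ^ 2 * dslope g c z := by
    rw [sq, mul_assoc, ← smul_eq_mul (z - c) (dslope g c z), sub_smul_dslope, ← dslope_same φ c,
      ← sub_smul_dslope φ c z]
    simp only [smul_eq_mul, g]
    ring
  rw [hφz, norm_mul, norm_pow, mul_comm]
  exact mul_le_mul_of_nonneg_right (hgz.trans_eq (by ring)) (by positivity)

variable {E : Type*} [NormedAddCommGroup E] [NormedSpace ℂ E]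

lemma mapsTo_add_smul_ball {x₀ h : E} {R : ℝ} (hh : h ≠ 0) :
    MapsTo (fun l : ℂ => x₀ + l • h) (ball 0 (R / ‖h‖)) (ball x₀ R) := fun l hl => by
  rw [mem_ball_zero_iff, lt_div_iff₀ (norm_pos_iff.2 hh)] at hl
  simpa [norm_smul] using hl

lemma hasDerivAt_comp_add_smul {g : E → ℂ} {x₀ : E} (hg : DifferentiableAt ℂ g x₀) (h : E) :
    HasDerivAt (fun l : ℂ => g (x₀ + l • h)) (fderiv ℂ g x₀ h) 0 := by
  have hline : HasDerivAt (fun l : ℂ => x₀ + l • h) h 0 := by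
    simpa using ((hasDerivAt_id (0 : ℂ)).smul_const h).const_add x₀
  exact (by simpa using hg.hasFDerivAt : HasFDerivAt g (fderiv ℂ g x₀) (x₀ + (0 : ℂ) • h))
    |>.comp_hasDerivAt 0 hline

/-- The one-variable Cauchy estimates, applied on the complex line through `x₀` in direction `h`. -/
lemma norm_fderiv_apply_le_and_norm_sub_sub_le {g : E → ℂ} {x₀ h : E} {R M : ℝ}
    (hg : DifferentiableOn ℂ g (ball x₀ R)) (hM : ∀ x ∈ ball x₀ R, ‖g x‖ ≤ M) (hh : ‖h‖ < R) :
    ‖fderiv ℂ g x₀ h‖ ≤ 2 * M / R * ‖h‖ ∧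
      ‖g (x₀ + h) - g x₀ - fderiv ℂ g x₀ h‖ ≤ 4 * M / R ^ 2 * ‖h‖ ^ 2 := by
  rcases eq_or_ne h 0 with rfl | h0
  · simp
  have hR : 0 < R := (norm_nonneg h).trans_lt hh
  have hρ : (1 : ℂ) ∈ ball 0 (R / ‖h‖) := by
    rwa [mem_ball_zero_iff, norm_one, one_lt_div (norm_pos_iff.2 h0)]
  have hφ : DifferentiableOn ℂ (fun l : ℂ => g (x₀ + l • h)) (ball 0 (R / ‖h‖)) :=
    hg.comp (by fun_prop) (mapsTo_add_smul_ball h0)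
  have hφM : ∀ l ∈ ball (0 : ℂ) (R / ‖h‖), ‖g (x₀ + l • h)‖ ≤ M :=
    fun l hl => hM _ (mapsTo_add_smul_ball h0 hl)
  have hderiv := (hasDerivAt_comp_add_smul
    (hg.differentiableAt (isOpen_ball.mem_nhds (mem_ball_self hR))) h).deriv
  have h1 := norm_dslope_le_two_mul_div hφ hφM (mem_ball_self (pos_of_mem_ball hρ))
  have h2 := norm_sub_sub_deriv_mul_le hφ hφM hρ
  rw [dslope_same, hderiv] at h1
  rw [hderiv] at h2
  simp only [one_smul, zero_smul, add_zero, sub_zero, mul_one, norm_one, one_pow] at h2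
  constructor
  · convert h1 using 1; field_simp
  · convert h2 using 1; field_simp

end CauchyEstimates

section Limits

lemma exists_tendsto_ultrafilter_of_norm_le {ι X : Type*} [NormedAddCommGroup X] [ProperSpace X]
    {u : ι → X} {C : ℝ} (hu : ∀ k, ‖u k‖ ≤ C) (U : Ultrafilter ι) :
    ∃ a, Tendsto u U (𝓝 a) := by
  obtain ⟨a, -, ha⟩ := (isCompact_closedBall (0 : X) C).ultrafilter_le_nhds (U.map u)
    (by
      rw [Ultrafilter.coe_map, le_principal_iff]
      exact mem_map.2 (univ_mem' fun k => mem_closedBall_zero_iff.2 (hu k)))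
  exact ⟨a, ha⟩

lemma hasFDerivAt_of_tendsto_of_norm_sub_sub_le {𝕜 ι E G : Type*} [NontriviallyNormedField 𝕜]
    [NormedAddCommGroup E] [NormedSpace 𝕜 E] [NormedAddCommGroup G] [NormedSpace 𝕜 G]
    {l : Filter ι} [l.NeBot] {F : ι → E → G} {D : ι → E →L[𝕜] G} {f : E → G} {L : E →L[𝕜] G}
    {x₀ : E} {R C : ℝ} (hR : 0 < R)
    (hF : ∀ h, ‖h‖ < R → Tendsto (fun k => F k (x₀ + h)) l (𝓝 (f (x₀ + h))))
    (hD : ∀ h, Tendsto (fun k => D k h) l (𝓝 (L h)))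
    (hbound : ∀ k h, ‖h‖ < R → ‖F k (x₀ + h) - F k x₀ - D k h‖ ≤ C * ‖h‖ ^ 2) :
    HasFDerivAt f L x₀ := by
  have hF₀ : Tendsto (fun k => F k x₀) l (𝓝 (f x₀)) := by simpa using hF 0 (by simpa using hR)
  have hlim : ∀ h, ‖h‖ < R → ‖f (x₀ + h) - f x₀ - L h‖ ≤ C * ‖h‖ ^ 2 := fun h hh =>
    le_of_tendsto (((hF h hh).sub hF₀).sub (hD h)).norm (.of_forall fun k => hbound k h hh)
  rw [hasFDerivAt_iff_isLittleO_nhds_zero]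
  refine Asymptotics.IsBigO.trans_isLittleO ?_ (Asymptotics.isLittleO_norm_pow_id one_lt_two)
  refine Asymptotics.IsBigO.of_bound C ?_
  filter_upwards [ball_mem_nhds (0 : E) hR] with h hh
  simpa using hlim h (mem_ball_zero_iff.1 hh)

variable {E : Type*} [NormedAddCommGroup E] [NormedSpace ℂ E] [FiniteDimensional ℂ E]

theorem exists_differentiableOn_tendsto_ultrafilter {ι : Type*} {Ω : Set E} (hΩ : IsOpen Ω)
    {F : ι → E → ℂ} (hF : ∀ k, DifferentiableOn ℂ (F k) Ω) {M : ℝ}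
    (hM : ∀ k, ∀ x ∈ Ω, ‖F k x‖ ≤ M) (U : Ultrafilter ι) :
    ∃ f : E → ℂ, DifferentiableOn ℂ f Ω ∧ ∀ x ∈ Ω, Tendsto (fun k => F k x) U (𝓝 (f x)) := by
  have hpt : ∀ x, ∃ a, x ∈ Ω → Tendsto (fun k => F k x) U (𝓝 a) := fun x => by
    by_cases hx : x ∈ Ω
    · obtain ⟨a, ha⟩ := exists_tendsto_ultrafilter_of_norm_le (fun k => hM k x hx) U
      exact ⟨a, fun _ => ha⟩
    · exact ⟨0, fun h => absurd h hx⟩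
  choose f hf using hpt
  refine ⟨f, fun x₀ hx₀ => ?_, hf⟩
  obtain ⟨R, hR, hsub⟩ := Metric.isOpen_iff.1 hΩ x₀ hx₀
  have hFR : ∀ k, DifferentiableOn ℂ (F k) (ball x₀ R) := fun k => (hF k).mono hsub
  have hMR : ∀ k, ∀ x ∈ ball x₀ R, ‖F k x‖ ≤ M := fun k x hx => hM k x (hsub hx)
  have hD : ∀ k, ‖fderiv ℂ (F k) x₀‖ ≤ 2 * M / R := fun k =>
    ContinuousLinearMap.opNorm_le_of_ball hR
      (by have := (norm_nonneg _).trans (hM k x₀ hx₀); positivity)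
      fun h hh => (norm_fderiv_apply_le_and_norm_sub_sub_le (hFR k) (hMR k)
        (mem_ball_zero_iff.1 hh)).1
  obtain ⟨L, hL⟩ := exists_tendsto_ultrafilter_of_norm_le hD U
  have hLh : ∀ h, Tendsto (fun k => fderiv ℂ (F k) x₀ h) U (𝓝 (L h)) := fun h =>
    ((ContinuousLinearMap.apply ℂ ℂ h).continuous.tendsto L).comp hL
  exact (hasFDerivAt_of_tendsto_of_norm_sub_sub_le hR (fun h hh => hf _ (hsub (by simpa using hh)))
    hLh fun k h hh => (norm_fderiv_apply_le_and_norm_sub_sub_le (hFR k) (hMR k) hh).2)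
    |>.differentiableAt.differentiableWithinAt

theorem exists_mapsTo_closedBall_of_tendsto {ι κ : Type*} {Ω : Set E} (hΩ : IsOpen Ω)
    {z : κ → E} (hz : ∀ j, z j ∈ Ω) {l : Filter ι} [l.NeBot] {F : ι → E → ℂ}
    (hF : ∀ k, DifferentiableOn ℂ (F k) Ω) (hF₁ : ∀ k, MapsTo (F k) Ω (closedBall 0 1))
    {w : κ → ℂ} (hw : ∀ j, Tendsto (fun k => F k (z j)) l (𝓝 (w j))) :
    ∃ f : E → ℂ, DifferentiableOn ℂ f Ω ∧ MapsTo f Ω (closedBall 0 1) ∧ ∀ j, f (z j) = w j := by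
  set U := Ultrafilter.of l
  obtain ⟨f, hf, hFf⟩ := exists_differentiableOn_tendsto_ultrafilter hΩ hF
    (fun k x hx => mem_closedBall_zero_iff.1 (hF₁ k hx)) U
  refine ⟨f, hf, fun x hx => isClosed_closedBall.mem_of_tendsto (hFf x hx)
    (.of_forall fun k => hF₁ k hx), fun j => ?_⟩
  exact tendsto_nhds_unique (hFf _ (hz j)) ((hw j).mono_left (Ultrafilter.of_le l))

end Limits

section Interpolation

/-- Lagrange interpolation: `∏_{j ≠ i} (f_ij - f_ij (z j)) / (f_ij (z i) - f_ij (z j))` is `1` at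
`z i` and `0` at every other `z k`. -/
theorem Subalgebra.exists_mem_interpolate {X K ι : Type*} [Field K] [Fintype ι]
    (A : Subalgebra K (X → K)) {z : ι → X}
    (hsep : ∀ i j, i ≠ j → ∃ f ∈ A, f (z i) ≠ f (z j)) (w : ι → K) :
    ∃ f ∈ A, ∀ k, f (z k) = w k := by
  classical
  have hpair : ∀ i j, ∃ g ∈ A, i ≠ j → g (z i) = 1 ∧ g (z j) = 0 := fun i j => by
    by_cases hij : i = j
    · exact ⟨0, A.zero_mem, fun h => absurd hij h⟩
    obtain ⟨f, hfA, hf⟩ := hsep i j hij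
    refine ⟨(f - algebraMap K _ (f (z j))) * algebraMap K _ (f (z i) - f (z j))⁻¹,
      A.mul_mem (A.sub_mem hfA (A.algebraMap_mem _)) (A.algebraMap_mem _), fun _ => ?_⟩
    simp [mul_inv_cancel₀ (sub_ne_zero.2 hf)]
  choose g hgA hg using hpair
  refine ⟨∑ i, w i • ∏ j ∈ Finset.univ.erase i, g i j,
    A.sum_mem fun i _ => A.smul_mem (A.prod_mem fun j _ => hgA i j) _, fun k => ?_⟩
  simp only [Finset.sum_apply, Pi.smul_apply, Finset.prod_apply, smul_eq_mul]
  rw [Finset.sum_eq_single k]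
  · rw [Finset.prod_eq_one fun j hj => (hg k j (Finset.ne_of_mem_erase hj).symm).1, mul_one]
  · intro i _ hik
    rw [Finset.prod_eq_zero (Finset.mem_erase.2 ⟨Ne.symm hik, Finset.mem_univ k⟩)
      (hg i k hik).2, mul_zero]
  · simp

variable {E : Type*} [NormedAddCommGroup E] [NormedSpace ℂ E]

def boundedHolomorphic (Ω : Set E) : Subalgebra ℂ (E → ℂ) where
  carrier := {f | DifferentiableOn ℂ f Ω ∧ ∃ C, ∀ x ∈ Ω, ‖f x‖ ≤ C}
  mul_mem' := by
    rintro f g ⟨hf, C, hC⟩ ⟨hg, D, hD⟩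
    refine ⟨hf.mul hg, C * D, fun x hx => ?_⟩
    rw [Pi.mul_apply, norm_mul]
    exact mul_le_mul (hC x hx) (hD x hx) (norm_nonneg _) ((norm_nonneg _).trans (hC x hx))
  add_mem' := by
    rintro f g ⟨hf, C, hC⟩ ⟨hg, D, hD⟩
    exact ⟨hf.add hg, C + D, fun x hx => (norm_add_le _ _).trans (add_le_add (hC x hx) (hD x hx))⟩
  algebraMap_mem' c := ⟨differentiableOn_const c, ‖c‖, fun _ _ => le_rfl⟩

end Interpolation

section PickBody

variable {m n : ℕ} {Ω : Set (Fin m → ℂ)} {z : Fin n → Fin m → ℂ}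

lemma zero_mem_pickBody : (0 : Fin n → ℂ) ∈ PickBody m n Ω z :=
  ⟨0, differentiableOn_const 0, ⟨0, zero_lt_one, fun _ _ => by simp⟩, fun _ => rfl⟩

lemma convex_pickBody : Convex ℝ (PickBody m n Ω z) := by
  rintro _ ⟨f, hf, ⟨c, hc, hfc⟩, hfv⟩ _ ⟨g, hg, ⟨d, hd, hgd⟩, hgv⟩ a b ha hb hab
  refine ⟨fun x => a • f x + b • g x, (hf.const_smul a).add (hg.const_smul b),
    ⟨max c d, max_lt hc hd, fun x hx => ?_⟩, fun j => by simp [hfv, hgv]⟩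
  calc ‖a • f x + b • g x‖ ≤ a * max c d + b * max c d := by
        refine (norm_add_le _ _).trans (add_le_add ?_ ?_) <;>
          rw [norm_smul, Real.norm_of_nonneg ‹_›] <;> gcongr
        exacts [(hfc x hx).trans (le_max_left c d), (hgd x hx).trans (le_max_right c d)]
    _ = max c d := by rw [← add_mul, hab, one_mul]

lemma balanced_pickBody : Balanced ℂ (PickBody m n Ω z) := by
  rintro a ha _ ⟨_, ⟨f, hf, ⟨c, hc, hfc⟩, hfv⟩, rfl⟩
  refine ⟨fun x => a * f x, hf.const_mul a, ⟨c, hc, fun x hx => ?_⟩, fun j => by simp [hfv]⟩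
  rw [norm_mul]
  exact (mul_le_of_le_one_left (norm_nonneg _) ha).trans (hfc x hx)

lemma pickBody_subset_closedBall (hz : ∀ j, z j ∈ Ω) :
    PickBody m n Ω z ⊆ closedBall 0 1 := by
  rintro _ ⟨f, -, ⟨c, hc, hfc⟩, hfv⟩
  exact mem_closedBall_zero_iff.2 <| (pi_norm_le_iff_of_nonneg zero_le_one).2 fun j =>
    hfv j ▸ (hfc _ (hz j)).trans hc.le

lemma absorbent_pickBody
    (hCara : ∀ x ∈ Ω, ∀ y ∈ Ω, x ≠ y → ∃ f : (Fin m → ℂ) → ℂ,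
      DifferentiableOn ℂ f Ω ∧ (∃ c : ℝ, ∀ x' ∈ Ω, ‖f x'‖ ≤ c) ∧ f x ≠ f y)
    (hz : ∀ j, z j ∈ Ω) (hinj : Function.Injective z) :
    Absorbent ℝ (PickBody m n Ω z) := by
  refine absorbent_iff_eventually_nhdsNE_zero.2 fun w => ?_
  obtain ⟨F, ⟨hF, M, hM⟩, hFz⟩ := (boundedHolomorphic Ω).exists_mem_interpolate
    (fun i j hij => by
      obtain ⟨f, hf, hfb, hne⟩ := hCara _ (hz i) _ (hz j) (hinj.ne hij)
      exact ⟨f, ⟨hf, hfb⟩, hne⟩) w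
  have hsmall : ∀ᶠ r : ℝ in 𝓝 0, |r| * M < 1 :=
    (continuous_abs.mul continuous_const).continuousAt.eventually_lt continuousAt_const
      (by simp)
  filter_upwards [nhdsWithin_le_nhds hsmall] with r hr
  refine ⟨fun x => r • F x, hF.const_smul r, ⟨|r| * M, hr, fun x hx => ?_⟩, fun j => ?_⟩
  · rw [norm_smul, Real.norm_eq_abs]
    exact mul_le_mul_of_nonneg_left (hM x hx) (abs_nonneg r)
  · simp [hFz]

lemma exists_mapsTo_ball_of_mem_pickBody {w : Fin n → ℂ} (hw : w ∈ PickBody m n Ω z) :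
    ∃ f : (Fin m → ℂ) → ℂ, DifferentiableOn ℂ f Ω ∧ MapsTo f Ω (ball 0 1) ∧ ∀ k, f (z k) = w k := by
  obtain ⟨f, hf, ⟨c, hc, hfc⟩, hfz⟩ := hw
  exact ⟨f, hf, fun x hx => mem_ball_zero_iff.2 ((hfc x hx).trans_lt hc), hfz⟩

lemma exists_mapsTo_ball_eq_mul_of_mul_gauge_lt_one (habs : Absorbent ℝ (PickBody m n Ω z))
    {α : Fin n → ℂ} {s : ℝ} (hs : 0 ≤ s) (hsα : s * gauge (PickBody m n Ω z) α < 1) :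
    ∃ f : (Fin m → ℂ) → ℂ, DifferentiableOn ℂ f Ω ∧ MapsTo f Ω (ball 0 1) ∧
      ∀ k, f (z k) = s * α k := by
  have hsD : s • α ∈ PickBody m n Ω z :=
    setOfPred_gauge_lt_one_subset_self convex_pickBody zero_mem_pickBody habs
      (show gauge _ (s • α) < 1 by rwa [gauge_smul_of_nonneg hs, smul_eq_mul])
  obtain ⟨f, hf, hfΩ, hfz⟩ := exists_mapsTo_ball_of_mem_pickBody hsD
  exact ⟨f, hf, hfΩ, fun k => by simp [hfz, Complex.real_smul]⟩

lemma norm_mul_gauge_pickBody_le_one {f : (Fin m → ℂ) → ℂ} {c : ℂ} {α : Fin n → ℂ}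
    (hf : DifferentiableOn ℂ f Ω) (hfΩ : MapsTo f Ω (ball 0 1)) (hfz : ∀ k, f (z k) = c * α k) :
    ‖c‖ * gauge (PickBody m n Ω z) α ≤ 1 := by
  rw [← gauge_smul balanced_pickBody, ← show (fun k => f (z k)) = c • α from funext hfz]
  refine le_of_forall_gt_imp_ge_of_dense fun a ha => gauge_le_of_mem (by positivity) ?_
  have ha0 : 0 < a := one_pos.trans ha
  rw [mem_smul_set_iff_inv_smul_mem₀ ha0.ne']
  refine ⟨fun x => a⁻¹ • f x, hf.const_smul a⁻¹, ⟨a⁻¹, inv_lt_one_of_one_lt₀ ha, fun x hx => ?_⟩,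
    fun k => rfl⟩
  rw [norm_smul, Real.norm_of_nonneg (inv_nonneg.2 ha0.le)]
  exact mul_le_of_le_one_right (by positivity) (mem_ball_zero_iff.1 (hfΩ hx)).le

end PickBody

section ExtremalScale

variable {m n : ℕ} {Ω : Set (Fin m → ℂ)} {z : Fin n → Fin m → ℂ} {α : Fin n → ℂ} {t : ℝ}

lemma dInv_eq_pdist (ht : 0 < t) (htα : ∀ k, t * ‖α k‖ ≤ 1)
    (hlt : ∀ s : ℝ, 0 ≤ s → s < t → ∃ f : (Fin m → ℂ) → ℂ, DifferentiableOn ℂ f Ω ∧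
      MapsTo f Ω (ball 0 1) ∧ ∀ k, f (z k) = s * α k)
    (hle : ∀ (f : (Fin m → ℂ) → ℂ) (c : ℂ), DifferentiableOn ℂ f Ω → MapsTo f Ω (ball 0 1) →
      (∀ k, f (z k) = c * α k) → ‖c‖ ≤ t) (i j : Fin n) :
    dInv m n Ω z α i j = pdist (t * α i) (t * α j) := by
  set S : Set ℝ := {r : ℝ | ∃ f : (Fin m → ℂ) → ℂ, DifferentiableOn ℂ f Ω ∧
    MapsTo f Ω (ball (0:ℂ) 1) ∧ (∃ c : ℂ, ∀ k, f (z k) = c * α k) ∧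
    r = pdist (f (z i)) (f (z j))}
  have hmem : ∀ s : ℝ, 0 ≤ s → s < t → pdist (s * α i) (s * α j) ∈ S := fun s hs hst => by
    obtain ⟨f, hf, hfΩ, hfz⟩ := hlt s hs hst
    exact ⟨f, hf, hfΩ, ⟨s, hfz⟩, by rw [hfz, hfz]⟩
  have hub : ∀ r ∈ S, r ≤ pdist (t * α i) (t * α j) := by
    rintro _ ⟨f, hf, hfΩ, ⟨c, hfz⟩, rfl⟩
    rw [hfz, hfz, pdist_mul_eq_pdist_norm_mul]
    exact pdist_ofReal_mul_le (norm_nonneg c) (hle f c hf hfΩ hfz) (htα i) (htα j)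
  change sSup S = _
  refine le_antisymm (csSup_le ⟨_, hmem 0 le_rfl ht⟩ hub) ?_
  have hev : ∀ᶠ s : ℝ in 𝓝[<] t, pdist (s * α i) (s * α j) ≤ sSup S := by
    filter_upwards [Ico_mem_nhdsLT ht] with s hs
    exact le_csSup ⟨_, hub⟩ (hmem s hs.1 hs.2)
  exact le_of_tendsto
    ((continuousAt_pdist_ofReal_mul ht.le (htα i) (htα j)).tendsto.mono_left nhdsWithin_le_nhds) hev

lemma exists_mapsTo_closedBall_eq_mul (hΩ : IsOpen Ω) (hz : ∀ j, z j ∈ Ω) (ht : 0 < t)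
    (hlt : ∀ s : ℝ, 0 ≤ s → s < t → ∃ f : (Fin m → ℂ) → ℂ, DifferentiableOn ℂ f Ω ∧
      MapsTo f Ω (ball 0 1) ∧ ∀ k, f (z k) = s * α k) :
    ∃ f : (Fin m → ℂ) → ℂ, DifferentiableOn ℂ f Ω ∧ MapsTo f Ω (closedBall 0 1) ∧
      ∀ k, f (z k) = t * α k := by
  obtain ⟨u, -, hu, hut⟩ := exists_seq_strictMono_tendsto' ht
  choose F hF hFΩ hFz using fun k => hlt (u k) (hu k).1.le (hu k).2
  refine exists_mapsTo_closedBall_of_tendsto hΩ hz (l := atTop) hF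
    (fun k => (hFΩ k).mono_right ball_subset_closedBall) fun j => ?_
  simpa only [hFz, Function.comp_def] using ((continuous_ofReal.tendsto t).comp hut).mul_const (α j)

end ExtremalScale

theorem stmt8_general (m n : ℕ) (Ω : Set (Fin m → ℂ)) (hopen : IsOpen Ω)
    (hCara : ∀ x ∈ Ω, ∀ y ∈ Ω, x ≠ y → ∃ f : (Fin m → ℂ) → ℂ,
      DifferentiableOn ℂ f Ω ∧ (∃ c : ℝ, ∀ x' ∈ Ω, ‖f x'‖ ≤ c) ∧ f x ≠ f y)
    (z : Fin n → (Fin m → ℂ)) (hz : ∀ j, z j ∈ Ω) (hinj : Function.Injective z)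
    (α : Fin n → ℂ) (hα : α ≠ 0)
    (t : ℝ) (ht : t = 1 / gauge (PickBody m n Ω z) α) :
    (∀ i j, dInv m n Ω z α i j = pdist ((t : ℂ) * α i) ((t : ℂ) * α j)) ∧
    ∃ f : (Fin m → ℂ) → ℂ, DifferentiableOn ℂ f Ω ∧
      MapsTo f Ω (closedBall (0:ℂ) 1) ∧ (∃ c : ℂ, ∀ k, f (z k) = c * α k) ∧
      ∀ i j, dInv m n Ω z α i j = pdist (f (z i)) (f (z j)) := by
  set D := PickBody m n Ω z
  have habs : Absorbent ℝ D := absorbent_pickBody hCara hz hinj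
  have hαγ : ‖α‖ ≤ gauge D α := by
    simpa using le_gauge_of_subset_closedBall habs zero_le_one (pickBody_subset_closedBall hz)
  have hγ : 0 < gauge D α := (norm_pos_iff.2 hα).trans_le hαγ
  have ht0 : 0 < t := ht ▸ one_div_pos.2 hγ
  have htγ : t * gauge D α = 1 := by rw [ht, one_div_mul_cancel hγ.ne']
  have htα : ∀ k, t * ‖α k‖ ≤ 1 := fun k =>
    htγ ▸ mul_le_mul_of_nonneg_left ((norm_le_pi_norm α k).trans hαγ) ht0.le
  have hlt : ∀ s : ℝ, 0 ≤ s → s < t → ∃ f : (Fin m → ℂ) → ℂ, DifferentiableOn ℂ f Ω ∧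
      MapsTo f Ω (ball 0 1) ∧ ∀ k, f (z k) = s * α k := fun s hs hst =>
    exists_mapsTo_ball_eq_mul_of_mul_gauge_lt_one habs hs (by nlinarith)
  have hle : ∀ (f : (Fin m → ℂ) → ℂ) (c : ℂ), DifferentiableOn ℂ f Ω → MapsTo f Ω (ball 0 1) →
      (∀ k, f (z k) = c * α k) → ‖c‖ ≤ t := fun f c hf hfΩ hfz => by
    nlinarith [norm_mul_gauge_pickBody_le_one hf hfΩ hfz]
  have hdInv := dInv_eq_pdist ht0 htα hlt hle
  obtain ⟨f, hf, hfΩ, hfz⟩ := exists_mapsTo_closedBall_eq_mul hopen hz ht0 hlt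
  exact ⟨hdInv, f, hf, hfΩ, ⟨t, hfz⟩, fun i j => by rw [hfz, hfz, hdInv]⟩

theorem stmt8 (m n : ℕ) (Ω : Set (Fin m → ℂ)) (hopen : IsOpen Ω) (hconn : IsConnected Ω)
    (hCara : ∀ x ∈ Ω, ∀ y ∈ Ω, x ≠ y → ∃ f : (Fin m → ℂ) → ℂ,
      DifferentiableOn ℂ f Ω ∧ (∃ c : ℝ, ∀ x' ∈ Ω, ‖f x'‖ ≤ c) ∧ f x ≠ f y)
    (z : Fin n → (Fin m → ℂ)) (hz : ∀ j, z j ∈ Ω) (hinj : Function.Injective z)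
    (α : Fin n → ℂ) (hα : α ≠ 0) (hαij : ∃ i j, α i ≠ α j)
    (t : ℝ) (ht : t = 1 / gauge (PickBody m n Ω z) α) :
    (∀ i j, dInv m n Ω z α i j = pdist ((t : ℂ) * α i) ((t : ℂ) * α j)) ∧
    ∃ f : (Fin m → ℂ) → ℂ, DifferentiableOn ℂ f Ω ∧
      MapsTo f Ω (closedBall (0:ℂ) 1) ∧ (∃ c : ℂ, ∀ k, f (z k) = c * α k) ∧
      ∀ i j, dInv m n Ω z α i j = pdist (f (z i)) (f (z j)) :=
  stmt8_general m n Ω hopen hCara z hz hinj α hα t ht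
end

section
/- For n = 2 points z1 ≠ z2 in a Carathéodory hyperbolic domain Ω and α = (α1, α2) with α1 ≠ α2, one has d_α(z1, z2) = c*_Ω(z1, z2). -/
open Complex Metric Set

noncomputable def cStar (m : ℕ) (Ω : Set (Fin m → ℂ)) (x y : Fin m → ℂ) : ℝ :=
  sSup {r : ℝ | ∃ g : (Fin m → ℂ) → ℂ, DifferentiableOn ℂ g Ω ∧
    MapsTo g Ω (ball (0:ℂ) 1) ∧ r = pdist (g x) (g y)}

/-!
Every competitor for `cStar` can be turned into a competitor for `dInv` with the same value by
composing it with a holomorphic self-map of the disc. Disc automorphisms act transitively on pairs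
of points at a given pseudohyperbolic distance `r`, so it suffices to find a scalar `t` with
`pdist (t α₀) (t α₁) = r`. Such a `t ∈ [0, 1 / max ‖αᵢ‖]` exists by the intermediate value
theorem: the distance is `0` at `t = 0` and `1` at the right endpoint, where one of the points
`t αᵢ` lies on the unit circle.
-/

open ComplexConjugate

namespace Complex

theorem sq_norm_one_sub_conj_mul (a b : ℂ) :
    ‖1 - conj a * b‖ ^ 2 = ‖a - b‖ ^ 2 + (1 - ‖a‖ ^ 2) * (1 - ‖b‖ ^ 2) := by
  simp only [Complex.sq_norm, normSq_apply, sub_re, sub_im, mul_re, mul_im, conj_re, conj_im,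
    one_re, one_im]
  ring

theorem eq_of_conj_mul_eq_one {a b : ℂ} (ha : ‖a‖ ≤ 1) (hb : ‖b‖ ≤ 1) (h : conj a * b = 1) :
    ‖a‖ = 1 ∧ a = b := by
  have hab : ‖a‖ * ‖b‖ = 1 := by simpa using congrArg norm h
  have ha1 : ‖a‖ = 1 := by nlinarith [norm_nonneg a, norm_nonneg b]
  refine ⟨ha1, ?_⟩
  have haa : a * conj a = 1 := by rw [mul_conj, ← Complex.sq_norm, ha1]; norm_num
  calc a = a * (conj a * b) := by rw [h, mul_one]
    _ = b := by rw [← mul_assoc, haa, one_mul]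

theorem one_sub_conj_mul_ne_zero {a b : ℂ} (ha : ‖a‖ < 1) (hb : ‖b‖ ≤ 1) :
    1 - conj a * b ≠ 0 := fun h ↦
  (eq_of_conj_mul_eq_one ha.le hb (sub_eq_zero.1 h).symm).1.not_lt ha

theorem one_sub_conj_mul_ne_zero_of_ne {a b : ℂ} (ha : ‖a‖ ≤ 1) (hb : ‖b‖ ≤ 1) (hab : a ≠ b) :
    1 - conj a * b ≠ 0 := fun h ↦
  hab (eq_of_conj_mul_eq_one ha hb (sub_eq_zero.1 h).symm).2

end Complex

theorem pdist_lt_one {a b : ℂ} (ha : ‖a‖ < 1) (hb : ‖b‖ < 1) : pdist a b < 1 := by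
  have hden : 0 < ‖1 - conj a * b‖ := norm_pos_iff.2 (one_sub_conj_mul_ne_zero ha hb.le)
  rw [pdist, norm_div, div_lt_one hden]
  refine lt_of_pow_lt_pow_left₀ 2 hden.le ?_
  have hpos : 0 < (1 - ‖a‖ ^ 2) * (1 - ‖b‖ ^ 2) :=
    mul_pos (by nlinarith [norm_nonneg a]) (by nlinarith [norm_nonneg b])
  rw [sq_norm_one_sub_conj_mul]
  linarith

theorem pdist_eq_one {a b : ℂ} (hab : a ≠ b) (h : ‖a‖ = 1 ∨ ‖b‖ = 1) : pdist a b = 1 := by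
  have hden : ‖1 - conj a * b‖ = ‖a - b‖ := by
    refine (pow_left_inj₀ (norm_nonneg _) (norm_nonneg _) two_ne_zero).1 ?_
    rcases h with h | h <;> rw [sq_norm_one_sub_conj_mul, h] <;> ring
  rw [pdist, norm_div, hden, div_self (norm_ne_zero_iff.2 (sub_ne_zero.2 hab))]

noncomputable def blaschke (a z : ℂ) : ℂ := (z - a) / (1 - conj a * z)

theorem norm_blaschke (a z : ℂ) : ‖blaschke a z‖ = pdist a z := by
  rw [blaschke, pdist, norm_div, norm_div, norm_sub_rev]

@[simp]
theorem blaschke_self (a : ℂ) : blaschke a a = 0 := by simp [blaschke]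

@[simp]
theorem blaschke_neg_zero (a : ℂ) : blaschke (-a) 0 = a := by simp [blaschke]

theorem blaschke_neg_blaschke {a b : ℂ} (ha : ‖a‖ < 1) (hb : ‖b‖ < 1) :
    blaschke (-a) (blaschke a b) = b := by
  have h₁ := one_sub_conj_mul_ne_zero ha hb.le
  have h₂ := one_sub_conj_mul_ne_zero ha ha.le
  have hden :
      1 + conj a * ((b - a) / (1 - conj a * b)) = (1 - conj a * a) / (1 - conj a * b) := by
    field_simp
    ring
  simp only [blaschke, map_neg, neg_mul, sub_neg_eq_add]
  rw [div_add' _ _ _ h₁, hden, div_div_div_cancel_right₀ h₁, div_eq_iff h₂]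
  ring

theorem differentiableOn_blaschke {a : ℂ} (ha : ‖a‖ < 1) :
    DifferentiableOn ℂ (blaschke a) (ball 0 1) :=
  DifferentiableOn.div (by fun_prop) (by fun_prop) fun _ hz ↦
    one_sub_conj_mul_ne_zero ha (mem_ball_zero_iff.1 hz).le

theorem mapsTo_blaschke {a : ℂ} (ha : ‖a‖ < 1) : MapsTo (blaschke a) (ball 0 1) (ball 0 1) :=
  fun z hz ↦ by
    rw [mem_ball_zero_iff, norm_blaschke]
    exact pdist_lt_one ha (mem_ball_zero_iff.1 hz)

theorem exists_selfMap_ball_of_pdist_eq {w₀ w₁ a₀ a₁ : ℂ} (hw₀ : ‖w₀‖ < 1) (ha₀ : ‖a₀‖ < 1)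
    (ha₁ : ‖a₁‖ < 1) (h : pdist a₀ a₁ = pdist w₀ w₁) :
    ∃ φ : ℂ → ℂ, DifferentiableOn ℂ φ (ball 0 1) ∧ MapsTo φ (ball 0 1) (ball 0 1) ∧
      φ w₀ = a₀ ∧ φ w₁ = a₁ := by
  set u := blaschke a₀ a₁
  set v := blaschke w₀ w₁
  have huv : ‖u‖ = ‖v‖ := by rw [norm_blaschke, norm_blaschke, h]
  -- if `v = 0` then also `u = 0`, and `u / v = 0` makes `φ` the constant `a₀`
  have hnorm : ‖u / v‖ ≤ 1 := by rw [norm_div, huv]; exact div_self_le_one _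
  have hcancel : u / v * v = u :=
    div_mul_cancel_of_imp fun hv ↦ norm_eq_zero.1 (huv.trans (norm_eq_zero.2 hv))
  have hrot : MapsTo (fun z ↦ u / v * blaschke w₀ z) (ball 0 1) (ball 0 1) := fun z hz ↦ by
    rw [mem_ball_zero_iff, norm_mul]
    exact (mul_le_of_le_one_left (norm_nonneg _) hnorm).trans_lt
      (mem_ball_zero_iff.1 (mapsTo_blaschke hw₀ hz))
  have ha₀' : ‖-a₀‖ < 1 := by rwa [norm_neg]
  refine ⟨fun z ↦ blaschke (-a₀) (u / v * blaschke w₀ z),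
    (differentiableOn_blaschke ha₀').comp
      ((differentiableOn_blaschke hw₀).const_mul _) hrot,
    (mapsTo_blaschke ha₀').comp hrot, by simp, ?_⟩
  change blaschke (-a₀) (u / v * v) = a₁
  rw [hcancel]
  exact blaschke_neg_blaschke ha₀ ha₁

theorem exists_pdist_ofReal_mul_eq {α₀ α₁ : ℂ} (hα : α₀ ≠ α₁) {r : ℝ} (hr₀ : 0 ≤ r)
    (hr₁ : r < 1) :
    ∃ t : ℝ, ‖(t : ℂ) * α₀‖ < 1 ∧ ‖(t : ℂ) * α₁‖ < 1 ∧ pdist (t * α₀) (t * α₁) = r := by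
  set M := max ‖α₀‖ ‖α₁‖
  have hM : 0 < M := by
    rcases eq_or_ne α₀ 0 with h | h
    · exact lt_max_of_lt_right (norm_pos_iff.2 (h ▸ hα).symm)
    · exact lt_max_of_lt_left (norm_pos_iff.2 h)
  have hnorm {t : ℝ} (ht : 0 ≤ t) : ‖(t : ℂ) * α₀‖ ≤ t * M ∧ ‖(t : ℂ) * α₁‖ ≤ t * M := by
    simp only [norm_mul, norm_real, Real.norm_of_nonneg ht]
    exact ⟨mul_le_mul_of_nonneg_left (le_max_left _ _) ht,
      mul_le_mul_of_nonneg_left (le_max_right _ _) ht⟩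
  have hne {t : ℝ} (ht : t ≠ 0) : (t : ℂ) * α₀ ≠ t * α₁ := fun h ↦
    hα (mul_left_cancel₀ (ofReal_ne_zero.2 ht) h)
  have hcont : ContinuousOn (fun t : ℝ ↦ pdist (t * α₀) (t * α₁)) (Icc 0 M⁻¹) := by
    refine ContinuousOn.norm (ContinuousOn.div (by fun_prop) (by fun_prop) fun t ⟨ht₀, ht⟩ ↦ ?_)
    have hle : t * M ≤ 1 := by rwa [← le_div_iff₀ hM, one_div]
    rcases eq_or_lt_of_le ht₀ with rfl | htpos
    · simp
    · exact one_sub_conj_mul_ne_zero_of_ne ((hnorm ht₀).1.trans hle) ((hnorm ht₀).2.trans hle)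
        (hne htpos.ne')
  have hT : pdist ((M⁻¹ : ℝ) * α₀) ((M⁻¹ : ℝ) * α₁) = 1 := by
    refine pdist_eq_one (hne (inv_ne_zero hM.ne')) ?_
    simp only [norm_mul, norm_real, Real.norm_of_nonneg (inv_nonneg.2 hM.le)]
    rcases max_choice ‖α₀‖ ‖α₁‖ with h | h
    · exact .inl (by rw [← h, inv_mul_cancel₀ hM.ne'])
    · exact .inr (by rw [← h, inv_mul_cancel₀ hM.ne'])
  obtain ⟨t, ⟨ht₀, htT⟩, hrt⟩ := intermediate_value_Icc (inv_nonneg.2 hM.le) hcont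
    ⟨by simpa [pdist] using hr₀, by rw [hT]; exact hr₁.le⟩
  have htT' : t < M⁻¹ := htT.lt_of_ne (by rintro rfl; exact hr₁.ne (hrt.symm.trans hT))
  have htM : t * M < 1 := by
    calc t * M < M⁻¹ * M := mul_lt_mul_of_pos_right htT' hM
      _ = 1 := inv_mul_cancel₀ hM.ne'
  exact ⟨t, (hnorm ht₀).1.trans_lt htM, (hnorm ht₀).2.trans_lt htM, hrt⟩

theorem stmt9_general (m : ℕ) (Ω : Set (Fin m → ℂ))
    (z : Fin 2 → (Fin m → ℂ)) (hz : ∀ j, z j ∈ Ω)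
    (α : Fin 2 → ℂ) (hα : α 0 ≠ α 1) :
    dInv m 2 Ω z α 0 1 = cStar m Ω (z 0) (z 1) := by
  unfold dInv cStar
  congr 1
  ext r
  constructor
  · rintro ⟨f, hf, hfΩ, -, rfl⟩
    exact ⟨f, hf, hfΩ, rfl⟩
  · rintro ⟨g, hg, hgΩ, rfl⟩
    have hw₀ := mem_ball_zero_iff.1 (hgΩ (hz 0))
    have hw₁ := mem_ball_zero_iff.1 (hgΩ (hz 1))
    obtain ⟨t, ht₀, ht₁, hpt⟩ :=
      exists_pdist_ofReal_mul_eq hα (norm_nonneg _) (pdist_lt_one hw₀ hw₁)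
    obtain ⟨φ, hφ, hφD, hφ₀, hφ₁⟩ := exists_selfMap_ball_of_pdist_eq hw₀ ht₀ ht₁ hpt
    refine ⟨φ ∘ g, hφ.comp hg hgΩ, hφD.comp hgΩ, ⟨t, Fin.forall_fin_two.2 ⟨hφ₀, hφ₁⟩⟩, ?_⟩
    exact (congrArg₂ pdist hφ₀ hφ₁).trans hpt |>.symm

theorem stmt9 (m : ℕ) (Ω : Set (Fin m → ℂ)) (hopen : IsOpen Ω) (hconn : IsConnected Ω)
    (hCara : ∀ x ∈ Ω, ∀ y ∈ Ω, x ≠ y → ∃ f : (Fin m → ℂ) → ℂ,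
      DifferentiableOn ℂ f Ω ∧ (∃ c : ℝ, ∀ x' ∈ Ω, ‖f x'‖ ≤ c) ∧ f x ≠ f y)
    (z : Fin 2 → (Fin m → ℂ)) (hz : ∀ j, z j ∈ Ω) (hne : z 0 ≠ z 1)
    (α : Fin 2 → ℂ) (hα : α 0 ≠ α 1) :
    dInv m 2 Ω z α 0 1 = cStar m Ω (z 0) (z 1) :=
  stmt9_general m Ω z hz α hα
end

section
/- A solvable Pick interpolation problem D ∋ z_j ↦ w_j ∈ closure(D), 1 ≤ j ≤ n, has a unique holomorphic solution f: D → closure(D) if and only if (w1,…,wn) ∈ ∂𝒟_n. -/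
open Complex Metric Set

def PickBodyD (n : ℕ) (z : Fin n → ℂ) : Set (Fin n → ℂ) :=
  {w | ∃ f : ℂ → ℂ, DifferentiableOn ℂ f (ball (0:ℂ) 1) ∧
        (∃ c : ℝ, c < 1 ∧ ∀ x ∈ ball (0:ℂ) 1, ‖f x‖ ≤ c) ∧ ∀ j, f (z j) = w j}

/-!
If `w ∈ PickBodyD`, with solution `f` of sup norm `c < 1`, then `f + ε · ∏ (x - z j)` is a
second solution for small `ε > 0`. Conversely, two distinct solutions `f ≠ g` of a problem with
`n + 1` nodes take values in the open disc (maximum modulus), so after a disc automorphism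
moving `w 0` to `0` they vanish at `z 0`, and Schwarz's lemma divides them by the Blaschke factor
of `z 0`. This Schur step produces two distinct solutions of a problem with `n` nodes; by
induction the latter has a solution of sup norm `< 1`, and undoing the Schur step gives one for
the original problem. Since `PickBodyD` is open (by Lagrange interpolation of small perturbations
of the data) and every solvable `w` lies in its closure (scale a solution by `s < 1`),
`w ∈ frontier PickBodyD` means exactly `w ∉ PickBodyD`.
-/

open ComplexConjugate

noncomputable def mobius (a b : ℂ) : ℂ := (b + a) / (1 + conj a * b)

section Mobius

variable {a b : ℂ}

theorem one_add_conj_mul_ne_zero (ha : ‖a‖ < 1) (hb : ‖b‖ ≤ 1) : 1 + conj a * b ≠ 0 := by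
  intro h
  have : ‖conj a * b‖ = 1 := by rw [eq_neg_of_add_eq_zero_right h, norm_neg, norm_one]
  rw [norm_mul, norm_conj] at this
  nlinarith [norm_nonneg a, norm_nonneg b]

theorem normSq_one_add_conj_mul_sub_normSq_add (a b : ℂ) :
    normSq (1 + conj a * b) - normSq (b + a) = (1 - normSq a) * (1 - normSq b) := by
  simp only [normSq_apply, add_re, add_im, mul_re, mul_im, conj_re, conj_im, one_re, one_im]
  ring

theorem norm_mobius_lt_one (ha : ‖a‖ < 1) (hb : ‖b‖ < 1) : ‖mobius a b‖ < 1 := by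
  have hden := one_add_conj_mul_ne_zero ha hb.le
  rw [mobius, norm_div, div_lt_one (norm_pos_iff.2 hden), ← sq_lt_sq₀ (norm_nonneg _)
    (norm_nonneg _), Complex.sq_norm, Complex.sq_norm, ← sub_pos,
    normSq_one_add_conj_mul_sub_normSq_add]
  have ha' : normSq a < 1 := by rw [← Complex.sq_norm]; nlinarith [norm_nonneg a]
  have hb' : normSq b < 1 := by rw [← Complex.sq_norm]; nlinarith [norm_nonneg b]
  nlinarith

theorem mobius_mobius_neg (ha : ‖a‖ < 1) (hb : ‖b‖ ≤ 1) : mobius a (mobius (-a) b) = b := by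
  have h₁ : 1 - conj a * b ≠ 0 := by
    simpa [sub_eq_add_neg] using one_add_conj_mul_ne_zero (a := -a) (by rwa [norm_neg]) hb
  have h₂ : 1 - conj a * b + conj a * (b - a) ≠ 0 := by
    rw [show 1 - conj a * b + conj a * (b - a) = ((1 - ‖a‖ ^ 2 : ℝ) : ℂ) by
      rw [Complex.sq_norm, ofReal_sub, ofReal_one, ← mul_conj]; ring]
    exact ofReal_ne_zero.2 (by nlinarith [norm_nonneg a])
  simp only [mobius, map_neg, neg_mul, ← sub_eq_add_neg]
  rw [div_add' _ _ _ h₁, mul_div_assoc', one_add_div h₁, div_div_div_cancel_right₀ h₁,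
    div_eq_iff h₂]
  ring

@[simp] theorem mobius_zero_right (a : ℂ) : mobius a 0 = a := by simp [mobius]

@[simp] theorem mobius_neg_self (a : ℂ) : mobius (-a) a = 0 := by simp [mobius]

theorem mobius_neg_mobius (ha : ‖a‖ < 1) (hb : ‖b‖ ≤ 1) : mobius (-a) (mobius a b) = b := by
  simpa using mobius_mobius_neg (a := -a) (by rwa [norm_neg]) hb

theorem differentiableOn_mobius (ha : ‖a‖ < 1) :
    DifferentiableOn ℂ (mobius a) (closedBall 0 1) :=
  ((differentiableOn_id.add_const a).div ((differentiableOn_id.const_mul _).const_add 1))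
    fun _ hb => one_add_conj_mul_ne_zero ha (mem_closedBall_zero_iff.1 hb)

theorem mapsTo_mobius_ball (ha : ‖a‖ < 1) : MapsTo (mobius a) (ball 0 1) (ball 0 1) :=
  fun _ hb => mem_ball_zero_iff.2 (norm_mobius_lt_one ha (mem_ball_zero_iff.1 hb))

theorem exists_norm_mobius_le (ha : ‖a‖ < 1) {c : ℝ} (hc : c < 1) :
    ∃ c' < 1, ∀ b, ‖b‖ ≤ c → ‖mobius a b‖ ≤ c' := by
  have hK : closedBall (0 : ℂ) (max c 0) ⊆ ball 0 1 := closedBall_subset_ball (max_lt hc one_pos)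
  obtain ⟨b₀, hb₀, hmax⟩ := (isCompact_closedBall (0 : ℂ) (max c 0)).exists_isMaxOn
    (nonempty_closedBall.2 (le_max_right c 0))
    (((differentiableOn_mobius ha).continuousOn.mono
      (hK.trans ball_subset_closedBall)).norm)
  refine ⟨‖mobius a b₀‖, norm_mobius_lt_one ha (mem_ball_zero_iff.1 (hK hb₀)), fun _ hb => ?_⟩
  exact hmax (mem_closedBall_zero_iff.2 (hb.trans (le_max_left c 0)))

end Mobius

theorem exists_eq_mobius_mobius_mul {f : ℂ → ℂ} (hf : DifferentiableOn ℂ f (ball 0 1))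
    (hmaps : MapsTo f (ball 0 1) (ball 0 1)) {a : ℂ} (ha : a ∈ ball 0 1) :
    ∃ q : ℂ → ℂ, DifferentiableOn ℂ q (ball 0 1) ∧ MapsTo q (ball 0 1) (closedBall 0 1) ∧
      ∀ x ∈ ball 0 1, f x = mobius (f a) (mobius (-a) x * q x) := by
  have ha' : ‖a‖ < 1 := mem_ball_zero_iff.1 ha
  have hfa : ‖-f a‖ < 1 := by rw [norm_neg]; exact mem_ball_zero_iff.1 (hmaps ha)
  have hna : ‖-a‖ < 1 := by rwa [norm_neg]
  set k := mobius (-f a) ∘ f ∘ mobius a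
  have hk_maps : MapsTo k (ball 0 1) (ball 0 1) :=
    (mapsTo_mobius_ball hfa).comp (hmaps.comp (mapsTo_mobius_ball ha'))
  have hk : DifferentiableOn ℂ k (ball 0 1) :=
    ((differentiableOn_mobius hfa).mono ball_subset_closedBall).comp
      (hf.comp ((differentiableOn_mobius ha').mono ball_subset_closedBall)
        (mapsTo_mobius_ball ha')) (hmaps.comp (mapsTo_mobius_ball ha'))
  have hk0 : k 0 = 0 := by simp [k]
  -- `q` is the Schwarz quotient `k y / y`, read in the coordinate `y = mobius (-a) x`.
  refine ⟨dslope k 0 ∘ mobius (-a), ?_, fun x hx => ?_, fun x hx => ?_⟩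
  · exact ((differentiableOn_dslope (ball_mem_nhds 0 one_pos)).2 hk).comp
      ((differentiableOn_mobius hna).mono ball_subset_closedBall) (mapsTo_mobius_ball hna)
  · have := Complex.norm_dslope_le_div_of_mapsTo_ball hk
      (by rw [hk0]; exact hk_maps.mono_right ball_subset_closedBall) (mapsTo_mobius_ball hna hx)
    simpa using this
  · have hx' : ‖x‖ ≤ 1 := (mem_ball_zero_iff.1 hx).le
    have hkx : k (mobius (-a) x) = mobius (-f a) (f x) := by
      simp only [k, Function.comp_apply, mobius_mobius_neg ha' hx']
    have := sub_smul_dslope k 0 (mobius (-a) x)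
    rw [hk0, sub_zero, sub_zero, smul_eq_mul, hkx] at this
    rw [Function.comp_apply, this, mobius_mobius_neg (mem_ball_zero_iff.1 (hmaps ha))
      (mem_ball_zero_iff.1 (hmaps hx)).le]

theorem eqOn_const_of_norm_eq_one {f : ℂ → ℂ} (hf : DifferentiableOn ℂ f (ball 0 1))
    (hmaps : MapsTo f (ball 0 1) (closedBall 0 1)) {x : ℂ} (hx : x ∈ ball 0 1)
    (h1 : ‖f x‖ = 1) : EqOn f (fun _ => f x) (ball 0 1) :=
  Complex.eqOn_of_isPreconnected_of_isMaxOn_norm (convex_ball 0 1).isPreconnected isOpen_ball hf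
    hx fun _ hy => by simpa [h1] using hmaps hy

theorem mapsTo_ball_of_not_eqOn {f g : ℂ → ℂ} (hf : DifferentiableOn ℂ f (ball 0 1))
    (hfm : MapsTo f (ball 0 1) (closedBall 0 1)) (hg : DifferentiableOn ℂ g (ball 0 1))
    (hgm : MapsTo g (ball 0 1) (closedBall 0 1)) {p : ℂ} (hp : p ∈ ball 0 1) (hfg : f p = g p)
    (hne : ¬EqOn f g (ball 0 1)) : MapsTo f (ball 0 1) (ball 0 1) := by
  intro x hx
  refine mem_ball_zero_iff.2 ((mem_closedBall_zero_iff.1 (hfm hx)).lt_of_ne fun h1 => hne ?_)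
  have hf_const := eqOn_const_of_norm_eq_one hf hfm hx h1
  have hg_const := eqOn_const_of_norm_eq_one hg hgm hp (by rw [← hfg, hf_const hp, h1])
  intro y hy
  rw [hf_const hy, hg_const hy, ← hfg, hf_const hp]

theorem eq_of_mobius_mobius_mul_eq {a w₀ x u v : ℂ} (ha : ‖a‖ < 1) (hw₀ : ‖w₀‖ < 1)
    (hx : x ∈ ball 0 1) (hxa : x ≠ a) (hu : ‖u‖ ≤ 1) (hv : ‖v‖ ≤ 1)
    (h : mobius w₀ (mobius (-a) x * u) = mobius w₀ (mobius (-a) x * v)) : u = v := by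
  have hB : ‖mobius (-a) x‖ < 1 :=
    norm_mobius_lt_one (by rwa [norm_neg]) (mem_ball_zero_iff.1 hx)
  have hB0 : mobius (-a) x ≠ 0 := fun h0 =>
    hxa (by rw [← mobius_mobius_neg ha (mem_ball_zero_iff.1 hx).le, h0, mobius_zero_right])
  have hle : ∀ {u : ℂ}, ‖u‖ ≤ 1 → ‖mobius (-a) x * u‖ ≤ 1 := fun hu => by
    rw [norm_mul]; nlinarith [norm_nonneg (mobius (-a) x), norm_nonneg u]
  have := congrArg (mobius (-w₀)) h
  rw [mobius_neg_mobius hw₀ (hle hu), mobius_neg_mobius hw₀ (hle hv)] at this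
  exact mul_left_cancel₀ hB0 this

def SupNormLtOne (f : ℂ → ℂ) : Prop :=
  ∃ c : ℝ, c < 1 ∧ ∀ x ∈ ball (0 : ℂ) 1, ‖f x‖ ≤ c

namespace SupNormLtOne

variable {f : ℂ → ℂ}

theorem mapsTo_closedBall (hf : SupNormLtOne f) : MapsTo f (ball 0 1) (closedBall 0 1) := by
  obtain ⟨c, hc, hfc⟩ := hf
  exact fun x hx => mem_closedBall_zero_iff.2 ((hfc x hx).trans hc.le)

theorem exists_add (hf : SupNormLtOne f) : ∃ δ > 0, ∀ p : ℂ → ℂ,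
    (∀ x ∈ ball (0 : ℂ) 1, ‖p x‖ ≤ δ) → SupNormLtOne fun x => f x + p x := by
  obtain ⟨c, hc, hfc⟩ := hf
  refine ⟨(1 - c) / 2, by linarith, fun p hp => ⟨(1 + c) / 2, by linarith, fun x hx => ?_⟩⟩
  calc ‖f x + p x‖ ≤ ‖f x‖ + ‖p x‖ := norm_add_le _ _
    _ ≤ c + (1 - c) / 2 := add_le_add (hfc x hx) (hp x hx)
    _ = (1 + c) / 2 := by ring

theorem mul {g : ℂ → ℂ} (hf : SupNormLtOne f) (hg : MapsTo g (ball 0 1) (closedBall 0 1)) :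
    SupNormLtOne fun x => g x * f x := by
  obtain ⟨c, hc, hfc⟩ := hf
  refine ⟨c, hc, fun x hx => ?_⟩
  calc ‖g x * f x‖ = ‖g x‖ * ‖f x‖ := norm_mul _ _
    _ ≤ 1 * c := mul_le_mul (mem_closedBall_zero_iff.1 (hg hx)) (hfc x hx) (norm_nonneg _)
        zero_le_one
    _ = c := one_mul c

theorem mobius_comp {a : ℂ} (ha : ‖a‖ < 1) (hf : SupNormLtOne f) :
    SupNormLtOne fun x => mobius a (f x) := by
  obtain ⟨c, hc, hfc⟩ := hf
  obtain ⟨c', hc', hmob⟩ := exists_norm_mobius_le ha hc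
  exact ⟨c', hc', fun x hx => hmob _ (hfc x hx)⟩

end SupNormLtOne

def IsPickSolution {n : ℕ} (z w : Fin n → ℂ) (f : ℂ → ℂ) : Prop :=
  DifferentiableOn ℂ f (ball 0 1) ∧ MapsTo f (ball 0 1) (closedBall 0 1) ∧ ∀ j, f (z j) = w j

open Polynomial in
theorem Polynomial.exists_norm_eval_le_of_mem_ball (p : ℂ[X]) :
    ∃ M > 0, ∀ x ∈ ball (0 : ℂ) 1, ‖p.eval x‖ ≤ M := by
  obtain ⟨M, hM⟩ := (isCompact_closedBall (0 : ℂ) 1).exists_bound_of_continuousOn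
    p.continuous.continuousOn
  exact ⟨max M 1, by positivity, fun x hx =>
    (hM x (ball_subset_closedBall hx)).trans (le_max_left M 1)⟩

open Polynomial in
theorem exists_interpolant_norm_le {n : ℕ} {z : Fin n → ℂ} (hinj : Function.Injective z) :
    ∃ C, ∀ v : Fin n → ℂ, ∃ p : ℂ[X], (∀ j, p.eval (z j) = v j) ∧
      ∀ x ∈ ball (0 : ℂ) 1, ‖p.eval x‖ ≤ C * ‖v‖ := by
  classical
  choose M _ hM using fun j => (Lagrange.basis Finset.univ z j).exists_norm_eval_le_of_mem_ball
  refine ⟨∑ j, M j, fun v => ⟨∑ j, C (v j) * Lagrange.basis Finset.univ z j, fun i => ?_,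
    fun x hx => ?_⟩⟩
  · rw [eval_finsetSum, Finset.sum_eq_single i]
    · rw [eval_mul, eval_C, Lagrange.eval_basis_self hinj.injOn (Finset.mem_univ i), mul_one]
    · intro j _ hji
      rw [eval_mul, Lagrange.eval_basis_of_ne hji (Finset.mem_univ i), mul_zero]
    · exact fun h => absurd (Finset.mem_univ i) h
  · rw [eval_finsetSum, Finset.sum_mul]
    refine (norm_sum_le _ _).trans (Finset.sum_le_sum fun j _ => ?_)
    rw [eval_mul, eval_C, norm_mul, mul_comm]
    exact mul_le_mul (hM j x hx) (norm_le_pi_norm v j) (norm_nonneg _)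
      ((norm_nonneg _).trans (hM j x hx))

theorem isOpen_pickBodyD {n : ℕ} {z : Fin n → ℂ} (hinj : Function.Injective z) :
    IsOpen (PickBodyD n z) := by
  obtain ⟨C, hC⟩ := exists_interpolant_norm_le hinj
  refine Metric.isOpen_iff.2 fun w ⟨f, hf, hf_lt, hfw⟩ => ?_
  obtain ⟨δ, hδ, hadd⟩ := SupNormLtOne.exists_add hf_lt
  refine ⟨δ / (|C| + 1), by positivity, fun w' hw' => ?_⟩
  obtain ⟨p, hpz, hp⟩ := hC (w' - w)
  refine ⟨fun x => f x + p.eval x, hf.add p.differentiable.differentiableOn,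
    hadd _ fun x hx => (hp x hx).trans ?_, fun j => by simp [hfw, hpz]⟩
  have hw'w : ‖w' - w‖ < δ / (|C| + 1) := by rwa [← dist_eq_norm]
  calc C * ‖w' - w‖ ≤ (|C| + 1) * ‖w' - w‖ := by gcongr; linarith [le_abs_self C]
    _ ≤ (|C| + 1) * (δ / (|C| + 1)) := by gcongr
    _ = δ := mul_div_cancel₀ δ (by positivity)

theorem mem_closure_pickBodyD {n : ℕ} {z w : Fin n → ℂ} {f : ℂ → ℂ}
    (hf : IsPickSolution z w f) : w ∈ closure (PickBodyD n z) := by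
  have hlim : Filter.Tendsto (fun s : ℝ => fun j => w j * s) (nhdsWithin 1 (Iio 1)) (nhds w) := by
    have : Continuous fun s : ℝ => fun j => w j * s := by fun_prop
    simpa using (this.tendsto 1).mono_left nhdsWithin_le_nhds
  refine mem_closure_of_tendsto hlim ?_
  filter_upwards [Ioo_mem_nhdsLT (show (0 : ℝ) < 1 from one_pos)] with s hs
  have hs_lt : SupNormLtOne fun _ => (s : ℂ) :=
    ⟨s, hs.2, fun _ _ => by rw [norm_real, Real.norm_of_nonneg hs.1.le]⟩
  exact ⟨fun x => f x * s, hf.1.mul_const _, hs_lt.mul hf.2.1,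
    fun j => congrArg (· * (s : ℂ)) (hf.2.2 j)⟩

theorem exists_not_eqOn_of_mem_pickBodyD {n : ℕ} {z w : Fin n → ℂ} (hw : w ∈ PickBodyD n z) :
    ∃ f g, IsPickSolution z w f ∧ IsPickSolution z w g ∧ ¬EqOn f g (ball 0 1) := by
  classical
  obtain ⟨f, hf, (hf_lt : SupNormLtOne f), hfw⟩ := hw
  obtain ⟨δ, hδ, hadd⟩ := SupNormLtOne.exists_add hf_lt
  set N := Lagrange.nodal Finset.univ z
  obtain ⟨M, hM_pos, hM⟩ := N.exists_norm_eval_le_of_mem_ball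
  obtain ⟨x, hx, hxz⟩ : ((ball (0 : ℂ) 1) \ range z).Nonempty :=
    ((infinite_of_mem_nhds 0 (ball_mem_nhds 0 one_pos)).sdiff (finite_range z)).nonempty
  have hg_lt : SupNormLtOne fun x => f x + ((δ / M : ℝ) : ℂ) * N.eval x := by
    refine hadd _ fun x hx => ?_
    rw [norm_mul, norm_real, Real.norm_of_nonneg (by positivity)]
    calc δ / M * ‖N.eval x‖ ≤ δ / M * M := by gcongr; exact hM x hx
      _ = δ := div_mul_cancel₀ δ hM_pos.ne'
  refine ⟨f, fun x => f x + ((δ / M : ℝ) : ℂ) * N.eval x, ⟨hf, hf_lt.mapsTo_closedBall, hfw⟩,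
    ⟨hf.add (N.differentiable.differentiableOn.const_mul _), hg_lt.mapsTo_closedBall,
      fun j => ?_⟩, fun h => ?_⟩
  · beta_reduce
    rw [Lagrange.eval_nodal_at_node (Finset.mem_univ j), mul_zero, add_zero, hfw]
  · have hN : N.eval x ≠ 0 :=
      Lagrange.eval_nodal_not_at_node fun j _ hj => hxz ⟨j, hj.symm⟩
    have := h hx
    simp only [left_eq_add, mul_eq_zero, ofReal_eq_zero, hN, or_false] at this
    exact (div_pos hδ hM_pos).ne' this

theorem mem_pickBodyD_succ_of_mem {n : ℕ} {z w : Fin (n + 1) → ℂ} {q : ℂ → ℂ}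
    (hz : z 0 ∈ ball 0 1) (hw : ‖w 0‖ < 1)
    (hq : ∀ j : Fin n, w j.succ = mobius (w 0) (mobius (-z 0) (z j.succ) * q (z j.succ)))
    (hq_mem : (fun j => q (z j.succ)) ∈ PickBodyD n (z ∘ Fin.succ)) :
    w ∈ PickBodyD (n + 1) z := by
  obtain ⟨F, hF, (hF_lt : SupNormLtOne F), hFq⟩ := hq_mem
  have hz' : ‖-z 0‖ < 1 := by rw [norm_neg]; exact mem_ball_zero_iff.1 hz
  have hB : MapsTo (mobius (-z 0)) (ball 0 1) (closedBall 0 1) :=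
    (mapsTo_mobius_ball hz').mono_right ball_subset_closedBall
  have hBF := hF_lt.mul hB
  refine ⟨fun x => mobius (w 0) (mobius (-z 0) x * F x), ?_, hBF.mobius_comp hw, ?_⟩
  · exact (differentiableOn_mobius hw).comp
      (((differentiableOn_mobius hz').mono ball_subset_closedBall).mul hF)
      hBF.mapsTo_closedBall
  · refine Fin.cases ?_ fun j => ?_
    · simp
    · rw [hq j]
      exact congrArg (fun u => mobius (w 0) (mobius (-z 0) (z j.succ) * u)) (hFq j)

theorem mem_pickBodyD_succ {n : ℕ} {z w : Fin (n + 1) → ℂ} {f g : ℂ → ℂ}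
    (hz : ∀ j, z j ∈ ball 0 1) (hinj : Function.Injective z)
    (hf : IsPickSolution z w f) (hg : IsPickSolution z w g) (hne : ¬EqOn f g (ball 0 1))
    (ih : ∀ {w' : Fin n → ℂ} {f' g' : ℂ → ℂ}, IsPickSolution (z ∘ Fin.succ) w' f' →
      IsPickSolution (z ∘ Fin.succ) w' g' → ¬EqOn f' g' (ball 0 1) →
      w' ∈ PickBodyD n (z ∘ Fin.succ)) :
    w ∈ PickBodyD (n + 1) z := by
  have hfg0 : f (z 0) = g (z 0) := by rw [hf.2.2, hg.2.2]
  have hf_maps := mapsTo_ball_of_not_eqOn hf.1 hf.2.1 hg.1 hg.2.1 (hz 0) hfg0 hne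
  have hg_maps := mapsTo_ball_of_not_eqOn hg.1 hg.2.1 hf.1 hf.2.1 (hz 0) hfg0.symm
    fun h => hne h.symm
  obtain ⟨qf, hqf, hqf_maps, hf_eq⟩ := exists_eq_mobius_mobius_mul hf.1 hf_maps (hz 0)
  obtain ⟨qg, hqg, hqg_maps, hg_eq⟩ := exists_eq_mobius_mobius_mul hg.1 hg_maps (hz 0)
  rw [hf.2.2] at hf_eq
  rw [hg.2.2] at hg_eq
  have hw0 : ‖w 0‖ < 1 := hf.2.2 0 ▸ mem_ball_zero_iff.1 (hf_maps (hz 0))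
  have hq_eq : ∀ j : Fin n, qg (z j.succ) = qf (z j.succ) := fun j =>
    eq_of_mobius_mobius_mul_eq (mem_ball_zero_iff.1 (hz 0)) hw0 (hz j.succ)
      (fun h => Fin.succ_ne_zero j (hinj h))
      (mem_closedBall_zero_iff.1 (hqg_maps (hz j.succ)))
      (mem_closedBall_zero_iff.1 (hqf_maps (hz j.succ)))
      (by rw [← hg_eq _ (hz j.succ), ← hf_eq _ (hz j.succ), hf.2.2, hg.2.2])
  have hq_ne : ¬EqOn qf qg (ball 0 1) := fun h =>
    hne fun x hx => by rw [hf_eq x hx, hg_eq x hx, h hx]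
  refine mem_pickBodyD_succ_of_mem (hz 0) hw0 (fun j => ?_)
    (ih ⟨hqf, hqf_maps, fun _ => rfl⟩ ⟨hqg, hqg_maps, hq_eq⟩ hq_ne)
  rw [← hf.2.2, hf_eq _ (hz j.succ)]

theorem mem_pickBodyD_of_not_eqOn {n : ℕ} {z w : Fin n → ℂ} {f g : ℂ → ℂ}
    (hz : ∀ j, z j ∈ ball 0 1) (hinj : Function.Injective z)
    (hf : IsPickSolution z w f) (hg : IsPickSolution z w g) (hne : ¬EqOn f g (ball 0 1)) :
    w ∈ PickBodyD n z := by
  induction n generalizing f g with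
  | zero => exact ⟨fun _ => 0, differentiableOn_const 0, ⟨0, one_pos, by simp⟩, finZeroElim⟩
  | succ n ih =>
    exact mem_pickBodyD_succ hz hinj hf hg hne fun hf' hg' hne' =>
      ih (fun j => hz j.succ) (hinj.comp (Fin.succ_injective n)) hf' hg' hne'

theorem stmt15_general (n : ℕ) (z : Fin n → ℂ)
    (hz : ∀ j, z j ∈ ball (0:ℂ) 1) (hinj : Function.Injective z)
    (w : Fin n → ℂ)
    (hsolv : ∃ f : ℂ → ℂ, DifferentiableOn ℂ f (ball (0:ℂ) 1) ∧
      MapsTo f (ball (0:ℂ) 1) (closedBall (0:ℂ) 1) ∧ ∀ j, f (z j) = w j) :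
    (∀ f g : ℂ → ℂ,
        (DifferentiableOn ℂ f (ball (0:ℂ) 1) ∧
          MapsTo f (ball (0:ℂ) 1) (closedBall (0:ℂ) 1) ∧ ∀ j, f (z j) = w j) →
        (DifferentiableOn ℂ g (ball (0:ℂ) 1) ∧
          MapsTo g (ball (0:ℂ) 1) (closedBall (0:ℂ) 1) ∧ ∀ j, g (z j) = w j) →
        EqOn f g (ball (0:ℂ) 1)) ↔
      w ∈ frontier (PickBodyD n z) := by
  obtain ⟨f, hf⟩ := hsolv
  rw [(isOpen_pickBodyD hinj).frontier_eq, mem_sdiff,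
    and_iff_right (mem_closure_pickBodyD (z := z) (f := f) hf)]
  constructor
  · intro huniq hw
    obtain ⟨f, g, hf, hg, hne⟩ := exists_not_eqOn_of_mem_pickBodyD hw
    exact hne (huniq f g hf hg)
  · intro hw f g hf hg
    by_contra hne
    exact hw (mem_pickBodyD_of_not_eqOn hz hinj hf hg hne)

theorem stmt15 (n : ℕ) (z : Fin n → ℂ)
    (hz : ∀ j, z j ∈ ball (0:ℂ) 1) (hinj : Function.Injective z)
    (w : Fin n → ℂ) (hw : ∀ j, w j ∈ closedBall (0:ℂ) 1)
    (hsolv : ∃ f : ℂ → ℂ, DifferentiableOn ℂ f (ball (0:ℂ) 1) ∧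
      MapsTo f (ball (0:ℂ) 1) (closedBall (0:ℂ) 1) ∧ ∀ j, f (z j) = w j) :
    (∀ f g : ℂ → ℂ,
        (DifferentiableOn ℂ f (ball (0:ℂ) 1) ∧
          MapsTo f (ball (0:ℂ) 1) (closedBall (0:ℂ) 1) ∧ ∀ j, f (z j) = w j) →
        (DifferentiableOn ℂ g (ball (0:ℂ) 1) ∧
          MapsTo g (ball (0:ℂ) 1) (closedBall (0:ℂ) 1) ∧ ∀ j, g (z j) = w j) →
        EqOn f g (ball (0:ℂ) 1)) ↔
      w ∈ frontier (PickBodyD n z) :=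
  stmt15_general n z hz hinj w hsolv
end
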